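/- For every n > 0 and every m ≥ n, every configuration γ reachable in F_n from ⟨s_0^m, 0⟩ satisfies γ →* ⟨s_0^{n−1} + s_n^{m−n+1}, n−1⟩; in particular, Post*({⟨s_0^m, 0⟩}) ⊆ Pre*([s_n]), i.e., from every reachable configuration a configuration containing s_n is reachable. -/

import Mathlib

/-- Operation type of a register protocol: read or write. -/
inductive Op : Type
  | R : Op
  | W : Op
deriving DecidableEq

instance : Fintype Op :=
  ⟨{Op.R, Op.W}, fun x => by cases x <;> simp⟩

/-- A location has at least one outgoing transition. -/
def Nonblock {Q D : Type*} (T : Set (Q × Op × D × Q)) : Prop :=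
  ∀ q : Q, ∃ op d q', (q, op, d, q') ∈ T

/-- Whenever a read transition exists from `q`, reads of every datum are enabled in `q`. -/
def ReadTotal {Q D : Type*} (T : Set (Q × Op × D × Q)) : Prop :=
  ∀ q d' q', (q, Op.R, d', q') ∈ T → ∀ d : D, ∃ qd, (q, Op.R, d, qd) ∈ T

/-- One step of the distributed system associated with transition set `T`:
a configuration is a pair of a finite multiset of locations and a register datum. -/
def IsStep {Q D : Type*} [DecidableEq Q] (T : Set (Q × Op × D × Q)) :
    Multiset Q × D → Multiset Q × D → Prop := fun γ γ' =>
  ∃ q op d'' q', (q, op, d'', q') ∈ T ∧ q ∈ γ.1 ∧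
    γ'.1 = γ.1 - {q} + {q'} ∧
    ((op = Op.R ∧ γ.2 = d'' ∧ γ'.2 = d'') ∨ (op = Op.W ∧ γ'.2 = d''))

/-- Reachability: reflexive-transitive closure of the step relation. -/
def Reach {Q D : Type*} [DecidableEq Q] (T : Set (Q × Op × D × Q)) :
    Multiset Q × D → Multiset Q × D → Prop :=
  Relation.ReflTransGen (IsStep T)

/-- `PostStar T S` is the set of configurations reachable from some configuration of `S`. -/
def PostStar {Q D : Type*} [DecidableEq Q] (T : Set (Q × Op × D × Q))
    (S : Set (Multiset Q × D)) : Set (Multiset Q × D) :=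
  {γ' | ∃ γ ∈ S, Reach T γ γ'}

/-- `PreStar T S` is the set of configurations from which some configuration of `S`
is reachable. -/
def PreStar {Q D : Type*} [DecidableEq Q] (T : Set (Q × Op × D × Q))
    (S : Set (Multiset Q × D)) : Set (Multiset Q × D) :=
  {γ | ∃ γ' ∈ S, Reach T γ γ'}

/-- `[qf]`: configurations containing at least one process in location `qf`. -/
def TargetSet {Q D : Type*} [DecidableEq Q] (qf : Q) : Set (Multiset Q × D) :=
  {γ | 0 < γ.1.count qf}

/-- The order `⪯` on configurations: same register content, same support,
and componentwise smaller multiset. -/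
def ConfLE {Q D : Type*} [DecidableEq Q] (γ γ' : Multiset Q × D) : Prop :=
  γ.2 = γ'.2 ∧ γ.1.toFinset = γ'.1.toFinset ∧ γ.1 ≤ γ'.1

/-- Upward closure of a set of configurations with respect to `⪯`. -/
def UpSet {Q D : Type*} [DecidableEq Q] (B : Set (Multiset Q × D)) :
    Set (Multiset Q × D) :=
  {γ' | ∃ γ ∈ B, ConfLE γ γ'}

/-- Transitions of the filter protocol `F_n` (for `n > 0`): locations
`s_0, …, s_n` are `Fin (n+1)`, data `0, …, n−1` are `Fin n`. Transitions:
`(s_0, W, 0, s_0)`; `(s_i, R, i, s_{i+1})` for `0 ≤ i ≤ n−1`;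
`(s_i, W, i, s_0)` for `1 ≤ i ≤ n−1`; and read self-loops `(s, R, d, s)` for
every pair `(s, d)` for which no other read transition is specified. -/
def FilterT (n : ℕ) : Set (Fin (n + 1) × Op × Fin n × Fin (n + 1)) := fun t =>
  match t with
  | (s, Op.W, d, s') =>
      ((s : ℕ) = 0 ∧ (d : ℕ) = 0 ∧ (s' : ℕ) = 0) ∨
      (1 ≤ (s : ℕ) ∧ (s : ℕ) ≤ n - 1 ∧ (d : ℕ) = (s : ℕ) ∧ (s' : ℕ) = 0)
  | (s, Op.R, d, s') =>
      ((s : ℕ) ≤ n - 1 ∧ (d : ℕ) = (s : ℕ) ∧ (s' : ℕ) = (s : ℕ) + 1) ∨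
      (¬ ((s : ℕ) ≤ n - 1 ∧ (d : ℕ) = (s : ℕ)) ∧ s' = s)


/-!
Reading `i` moves a process from `s_i` to `s_{i+1}`, and the value `i ≥ 1` can only be put in
the register by a process leaving `s_i` for `s_0`. Hence at least `j - 1` processes always
stay strictly below `s_j`, and at least `j` while the register holds a value `≥ j`; for
`j = n` this leaves at most `m - n + 1` processes in `s_n`.

Conversely, every process strictly between `s_0` and `s_n` can write and return to `s_0`.
From `s_0^a` with `a ≥ n`, one process writes `0`; then for `i = 0, …, n - 2` all processes
in `s_i` read `i` and one of them writes `i + 1` and falls back to `s_0`; finally any number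
of the processes in `s_{n-1}` read `n - 1` and the others write it and fall back. This fills
`s_n` up to `m - n + 1` processes, leaving `n - 1` in `s_0`.
-/

theorem Multiset.countP_le_countP_of_imp {α : Type*} {p q : α → Prop} [DecidablePred p]
    [DecidablePred q] (s : Multiset α) (h : ∀ a, p a → q a) : s.countP p ≤ s.countP q := by
  simp only [Multiset.countP_eq_card_filter]
  exact Multiset.card_le_card (Multiset.monotone_filter_right s h)

open Multiset

section RegisterProtocol

variable {Q D : Type*} [DecidableEq Q] {T : Set (Q × Op × D × Q)}

theorem IsStep.exists_cons {γ γ' : Multiset Q × D} (h : IsStep T γ γ') :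
    ∃ q op d q' ν, (q, op, d, q') ∈ T ∧ γ.1 = q ::ₘ ν ∧ γ'.1 = q' ::ₘ ν ∧
      ((op = Op.R ∧ γ.2 = d ∧ γ'.2 = d) ∨ (op = Op.W ∧ γ'.2 = d)) := by
  obtain ⟨q, op, d, q', hT, hq, hγ', hop⟩ := h
  refine ⟨q, op, d, q', γ.1.erase q, hT, (cons_erase hq).symm, ?_, hop⟩
  rw [hγ', sub_singleton, add_comm, singleton_add]

theorem isStep_cons {q q' : Q} {op : Op} {d₀ d : D} (hT : (q, op, d, q') ∈ T)
    (hread : op = Op.R → d₀ = d) (ν : Multiset Q) :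
    IsStep T (q ::ₘ ν, d₀) (q' ::ₘ ν, d) := by
  refine ⟨q, op, d, q', hT, mem_cons_self q ν, ?_, ?_⟩
  · rw [add_comm, singleton_add, sub_singleton, erase_cons_head]
  · cases op with
    | R => exact Or.inl ⟨rfl, hread rfl, rfl⟩
    | W => exact Or.inr ⟨rfl, rfl⟩

theorem isStep_cons_of_mem {q q' : Q} {op : Op} {d : D} (hT : (q, op, d, q') ∈ T)
    (ν : Multiset Q) : IsStep T (q ::ₘ ν, d) (q' ::ₘ ν, d) :=
  isStep_cons hT (fun _ => rfl) ν

theorem isStep_cons_of_write_mem {q q' : Q} {d : D} (hT : (q, Op.W, d, q') ∈ T)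
    (ν : Multiset Q) (d₀ : D) : IsStep T (q ::ₘ ν, d₀) (q' ::ₘ ν, d) :=
  isStep_cons hT (fun h => nomatch h) ν

theorem IsStep.add_left {γ γ' : Multiset Q × D} (h : IsStep T γ γ') (C : Multiset Q) :
    IsStep T (C + γ.1, γ.2) (C + γ'.1, γ'.2) := by
  obtain ⟨q, op, d, q', ν, hT, hγ, hγ', hop⟩ := h.exists_cons
  rw [hγ, hγ', add_cons, add_cons]
  rcases hop with ⟨rfl, h₁, h₂⟩ | ⟨rfl, h₂⟩
  · rw [h₂]
    exact isStep_cons hT (fun _ => h₁) _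
  · rw [h₂]
    exact isStep_cons_of_write_mem hT _ _

theorem IsStep.card_eq {γ γ' : Multiset Q × D} (h : IsStep T γ γ') :
    card γ'.1 = card γ.1 := by
  obtain ⟨q, op, d, q', ν, -, hγ, hγ', -⟩ := h.exists_cons
  rw [hγ, hγ', card_cons, card_cons]

theorem Reach.add_left {μ μ' : Multiset Q} {d d' : D} (h : Reach T (μ, d) (μ', d'))
    (C : Multiset Q) : Reach T (C + μ, d) (C + μ', d') :=
  Relation.ReflTransGen.lift (fun γ : Multiset Q × D => (C + γ.1, γ.2))
    (fun _ _ (hs : IsStep T _ _) => hs.add_left C) _ _ h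

theorem Reach.add_right {μ μ' : Multiset Q} {d d' : D} (h : Reach T (μ, d) (μ', d'))
    (C : Multiset Q) : Reach T (μ + C, d) (μ' + C, d') := by
  simpa only [add_comm _ C] using h.add_left C

theorem Reach.card_eq {γ γ' : Multiset Q × D} (h : Reach T γ γ') : card γ'.1 = card γ.1 := by
  induction h with
  | refl => rfl
  | tail _ hs ih => exact hs.card_eq.trans ih

theorem reach_replicate {q q' : Q} {op : Op} {d : D} (hT : (q, op, d, q') ∈ T) (k : ℕ) :
    Reach T (replicate k q, d) (replicate k q', d) := by
  induction k with
  | zero => exact .refl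
  | succ k ih =>
    rw [replicate_succ, replicate_succ]
    refine .tail ?_ (isStep_cons_of_mem hT _)
    simpa only [Reach, singleton_add] using ih.add_left {q}

end RegisterProtocol

-- Stated for `F_{n+1}`, whose locations `Fin (n + 2)` and data `Fin (n + 1)` are related by
-- `Fin.castSucc`, `Fin.succ` and `Fin.last`.
namespace FilterProtocol

variable {n : ℕ}

theorem mem_filterT_write {q q' : Fin (n + 2)} {d : Fin (n + 1)} :
    (q, Op.W, d, q') ∈ FilterT (n + 1) ↔ (q : ℕ) = d ∧ q' = 0 := by
  change (_ ∨ _) ↔ _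
  simp only [Fin.ext_iff, Fin.val_zero]
  omega

theorem mem_filterT_read {q q' : Fin (n + 2)} {d : Fin (n + 1)} :
    (q, Op.R, d, q') ∈ FilterT (n + 1) ↔
      ((q : ℕ) = d ∧ (q' : ℕ) = q + 1) ∨ ((q : ℕ) ≠ d ∧ q' = q) := by
  change (_ ∨ _) ↔ _
  simp only [Fin.ext_iff]
  omega

theorem read_mem_filterT (i : Fin (n + 1)) : (i.castSucc, Op.R, i, i.succ) ∈ FilterT (n + 1) :=
  mem_filterT_read.2 (Or.inl ⟨rfl, rfl⟩)

theorem write_mem_filterT (i : Fin (n + 1)) : (i.castSucc, Op.W, i, 0) ∈ FilterT (n + 1) :=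
  mem_filterT_write.2 ⟨rfl, rfl⟩

-- Each round `i ≤ i' < n` leaves one process behind in `s_0`, the writer of `i' + 1`.
theorem reach_climb (i : Fin (n + 1)) {k r : ℕ} (h : r + (n - i) ≤ k) :
    Reach (FilterT (n + 1)) (replicate k i.castSucc, i)
      (replicate (k - r) 0 + replicate r (Fin.last (n + 1)), Fin.last n) := by
  induction i using Fin.reverseInduction generalizing k r with
  | last =>
    have hsplit : replicate k (Fin.last n).castSucc =
        replicate (k - r) (Fin.last n).castSucc + replicate r (Fin.last n).castSucc := by
      rw [← replicate_add]; congr 1; omega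
    rw [hsplit]
    refine ((reach_replicate (write_mem_filterT _) _).add_right _).trans ?_
    exact (reach_replicate (read_mem_filterT (Fin.last n)) r).add_left _
  | cast j ih =>
    have hj := j.isLt
    rw [Fin.val_castSucc] at h
    obtain ⟨k, rfl⟩ : ∃ k', k = k' + 1 := ⟨k - 1, by omega⟩
    have hr : r ≤ k := by omega
    refine (reach_replicate (read_mem_filterT j.castSucc) _).trans ?_
    rw [replicate_succ, Fin.succ_castSucc]
    refine .head (isStep_cons_of_write_mem (write_mem_filterT j.succ) _ _) ?_
    have hclimb := (ih (k := k) (r := r) (by rw [Fin.val_succ]; omega)).add_left {0}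
    rwa [singleton_add, singleton_add, ← cons_add, ← replicate_succ, ← Nat.sub_add_comm hr]
      at hclimb

theorem reach_push {a : ℕ} (d : Fin (n + 1)) (h : n ≤ a) :
    Reach (FilterT (n + 1)) (replicate a 0, d)
      (replicate n 0 + replicate (a - n) (Fin.last (n + 1)), Fin.last n) := by
  cases a with
  | zero =>
    obtain rfl : n = 0 := by omega
    obtain rfl : d = Fin.last 0 := Subsingleton.elim (α := Fin 1) _ _
    exact .refl
  | succ a =>
    have hclimb := reach_climb (0 : Fin (n + 1)) (k := a + 1) (r := a + 1 - n)
      (by rw [Fin.val_zero]; omega)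
    rw [Fin.castSucc_zero, Nat.sub_sub_self h] at hclimb
    rw [replicate_succ] at hclimb ⊢
    exact .head (isStep_cons_of_write_mem (write_mem_filterT 0) _ _) hclimb

def flatten : Fin (n + 2) → Fin (n + 2) :=
  Fin.lastCases (Fin.last (n + 1)) fun _ => 0

theorem map_flatten (μ : Multiset (Fin (n + 2))) :
    μ.map flatten = replicate (μ.countP (· ≠ Fin.last (n + 1))) 0 +
      replicate (μ.count (Fin.last (n + 1))) (Fin.last (n + 1)) := by
  induction μ using Multiset.induction_on with
  | empty => simp
  | cons q μ ih =>
    induction q using Fin.lastCases with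
    | last => simp [flatten, ih, count_cons_self, replicate_succ, add_cons]
    | cast i => simp [flatten, ih, countP_cons_of_pos, (Fin.castSucc_lt_last i).ne,
      count_cons_of_ne (Fin.castSucc_lt_last i).ne', replicate_succ]

theorem exists_reach_map_flatten (μ : Multiset (Fin (n + 2))) (d : Fin (n + 1)) :
    ∃ d', Reach (FilterT (n + 1)) (μ, d) (μ.map flatten, d') := by
  induction μ using Multiset.induction_on generalizing d with
  | empty => exact ⟨d, .refl⟩
  | cons q μ ih =>
    obtain ⟨d', hμ⟩ := ih d
    have hcons : Reach (FilterT (n + 1)) (q ::ₘ μ, d) (q ::ₘ μ.map flatten, d') := by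
      simpa only [singleton_add] using hμ.add_left {q}
    rw [map_cons]
    induction q using Fin.lastCases with
    | last => exact ⟨d', by simpa [flatten] using hcons⟩
    | cast i =>
      refine ⟨i, hcons.tail ?_⟩
      simpa [flatten] using isStep_cons_of_write_mem (write_mem_filterT i) (μ.map flatten) d'

def FilterInvariant (n : ℕ) (γ : Multiset (Fin (n + 2)) × Fin (n + 1)) : Prop :=
  ∀ j ≤ n + 1,
    j ≤ γ.1.countP (fun q : Fin (n + 2) => (q : ℕ) < j) + if (γ.2 : ℕ) < j then 1 else 0

theorem filterInvariant_replicate_zero {m : ℕ} (hm : n + 1 ≤ m) :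
    FilterInvariant n (replicate m 0, 0) := by
  intro j hj
  rcases Nat.eq_zero_or_pos j with rfl | hj0
  · exact Nat.zero_le _
  · rw [countP_eq_card.2 (fun q hq => by rw [eq_of_mem_replicate hq]; exact hj0),
      card_replicate]
    omega

theorem FilterInvariant.of_isStep {γ γ' : Multiset (Fin (n + 2)) × Fin (n + 1)}
    (hI : FilterInvariant n γ) (h : IsStep (FilterT (n + 1)) γ γ') : FilterInvariant n γ' := by
  obtain ⟨q, op, d, q', ν, hT, hγ, hγ', hop⟩ := h.exists_cons
  have hI' : ∀ j ≤ n + 1, j ≤ ν.countP (fun q : Fin (n + 2) => (q : ℕ) < j) +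
      (if (q : ℕ) < j then 1 else 0) + if (γ.2 : ℕ) < j then 1 else 0 := by
    simpa only [FilterInvariant, hγ, countP_cons] using hI
  intro j hj
  rw [hγ', countP_cons]
  rcases hop with ⟨rfl, hd, hd'⟩ | ⟨rfl, hd'⟩
  · rw [hd', ← hd]
    rcases mem_filterT_read.1 hT with ⟨hqd, hq'⟩ | ⟨-, rfl⟩
    · -- climbing from `s_q` to `s_{q+1}`: at `j = q + 1`, use the bound at `j = q`
      have hq := hI' q (by omega)
      have hmono : ν.countP (fun a : Fin (n + 2) => (a : ℕ) < q) ≤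
          ν.countP (fun a : Fin (n + 2) => (a : ℕ) < q + 1) :=
        ν.countP_le_countP_of_imp fun _ ha => by omega
      have := hI' j hj
      rw [← hd] at hqd
      rcases Nat.lt_trichotomy j (q + 1) with hlt | rfl | hgt <;> split_ifs at hq this ⊢ <;> omega
    · exact (hI' j hj).trans_eq (by rw [hd])
  · obtain ⟨hqd, rfl⟩ := mem_filterT_write.1 hT
    have := hI' j hj
    rw [hd', Fin.val_zero]
    split_ifs at this ⊢ <;> omega

theorem FilterInvariant.of_reach {γ γ' : Multiset (Fin (n + 2)) × Fin (n + 1)}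
    (hI : FilterInvariant n γ) (h : Reach (FilterT (n + 1)) γ γ') : FilterInvariant n γ' := by
  induction h with
  | refl => exact hI
  | tail _ hs ih => exact ih.of_isStep hs

theorem FilterInvariant.le_countP_ne_last {γ : Multiset (Fin (n + 2)) × Fin (n + 1)}
    (hI : FilterInvariant n γ) : n ≤ γ.1.countP (· ≠ Fin.last (n + 1)) := by
  have h := hI (n + 1) le_rfl
  rw [if_pos (by omega)] at h
  have hlast : γ.1.countP (fun q : Fin (n + 2) => (q : ℕ) < n + 1) =
      γ.1.countP (· ≠ Fin.last (n + 1)) :=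
    countP_congr rfl fun q _ => propext (by rw [Ne, Fin.ext_iff, Fin.val_last]; omega)
  omega

theorem reach_target_of_reach {m : ℕ} (hm : n + 1 ≤ m)
    {γ : Multiset (Fin (n + 2)) × Fin (n + 1)}
    (hγ : Reach (FilterT (n + 1)) (replicate m 0, 0) γ) :
    Reach (FilterT (n + 1)) γ
      (replicate n 0 + replicate (m - n) (Fin.last (n + 1)), Fin.last n) := by
  obtain ⟨μ, d⟩ := γ
  have hcard : card μ = m := hγ.card_eq.trans (card_replicate m 0)
  have hbelow : n ≤ μ.countP (· ≠ Fin.last (n + 1)) :=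
    ((filterInvariant_replicate_zero hm).of_reach hγ).le_countP_ne_last
  obtain ⟨d', hflat⟩ := exists_reach_map_flatten μ d
  rw [map_flatten] at hflat
  have hsum : μ.countP (· ≠ Fin.last (n + 1)) + μ.count (Fin.last (n + 1)) = m := by
    have h := congrArg card (map_flatten μ)
    rwa [card_map, card_add, card_replicate, card_replicate, hcard, eq_comm] at h
  have htarget :
      replicate n 0 + replicate (μ.countP (· ≠ Fin.last (n + 1)) - n) (Fin.last (n + 1)) +
      replicate (μ.count (Fin.last (n + 1))) (Fin.last (n + 1)) =
      replicate n 0 + replicate (m - n) (Fin.last (n + 1)) := by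
    rw [add_assoc (replicate n 0), ← replicate_add]
    congr 2
    omega
  have hpush := (reach_push d' hbelow).add_right
    (replicate (μ.count (Fin.last (n + 1))) (Fin.last (n + 1)))
  rw [htarget] at hpush
  exact hflat.trans hpush

end FilterProtocol

/-- for `m ≥ n`, every configuration reachable in `F_n` from
`⟨s_0^m, 0⟩` can reach `⟨s_0^{n−1} + s_n^{m−n+1}, n−1⟩`; in particular
`Post*({⟨s_0^m, 0⟩}) ⊆ Pre*([s_n])`. -/
theorem stmt_14 (n : ℕ) (hn : 0 < n) (m : ℕ) (hm : n ≤ m) :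
    (∀ γ ∈ PostStar (FilterT n)
        {(Multiset.replicate m (⟨0, by omega⟩ : Fin (n + 1)), (⟨0, hn⟩ : Fin n))},
      Reach (FilterT n) γ
        (Multiset.replicate (n - 1) (⟨0, by omega⟩ : Fin (n + 1)) +
           Multiset.replicate (m - n + 1) (Fin.last n),
         (⟨n - 1, by omega⟩ : Fin n))) ∧
    PostStar (FilterT n)
        {(Multiset.replicate m (⟨0, by omega⟩ : Fin (n + 1)), (⟨0, hn⟩ : Fin n))} ⊆
      PreStar (FilterT n) (TargetSet (Fin.last n)) := by
  obtain ⟨n, rfl⟩ : ∃ k, n = k + 1 := ⟨n - 1, by omega⟩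
  have hreach : ∀ γ ∈ PostStar (FilterT (n + 1)) {(replicate m 0, 0)},
      Reach (FilterT (n + 1)) γ
        (replicate n 0 + replicate (m - n) (Fin.last (n + 1)), Fin.last n) := by
    rintro γ ⟨_, rfl, hγ⟩
    exact FilterProtocol.reach_target_of_reach hm hγ
  have hcount : m - (n + 1) + 1 = m - n := by omega
  simp only [Fin.zero_eta, Nat.add_sub_cancel, hcount]
  refine ⟨hreach, fun γ hγ => ⟨_, ?_, hreach γ hγ⟩⟩
  show 0 < count _ (_ + _)
  rw [count_add, count_replicate_self]
  omega
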